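/- Let $\gamma$ be a positive semidefinite trace-class operator on a Hilbert space with $\mathrm{Tr}\,\gamma = 1$, and let $P$ be a rank-one orthogonal projection, $Q = 1 - P$. Then $\mathrm{Tr}\,|\gamma - P| \le 4\sqrt{\mathrm{Tr}(Q\gamma Q)}$. -/

import Mathlib

/-!
Write `P = |φ⟩⟨φ|` with `‖φ‖ = 1` and put `A = γ - P`. Since `A + P = γ ≥ 0`, the form of `A`
is bounded below by `-|⟨φ, u⟩|²`, so `A` has at most one negative eigenvalue: two orthonormal
negative eigenvectors would span a vector orthogonal to `φ` on which the form of `A` is negative.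
As `Tr A = 0`, the trace norm of `A` is twice the absolute value of that eigenvalue (or `0`).

To bound it, write `γ = B* B`, `t = Tr(QγQ)` and split a unit vector as `v = ⟨φ, v⟩ φ + w` with
`w ⊥ φ`. Then `‖Bφ‖² = 1 - t` and `‖Bw‖² ≤ t`, and the reverse triangle inequality for
`‖Bv‖` gives `⟨v, Pv⟩ - ⟨v, γv⟩ ≤ 2√t`, i.e. every eigenvalue of `A` is at least `-2√t`.
-/

open scoped ComplexOrder InnerProductSpace ComplexConjugate
open Matrix RCLike WithLp

theorem sum_abs_le_two_mul_of_sum_eq_zero {ι : Type*} [Fintype ι] {L : ι → ℝ} {c : ℝ}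
    (hsum : ∑ i, L i = 0) (hc : 0 ≤ c) (hL : ∀ i, -c ≤ L i)
    (hneg : {i | L i < 0}.Subsingleton) : ∑ i, |L i| ≤ 2 * c := by
  have hshift : ∑ i, |L i| = ∑ i, (|L i| - L i) := by
    rw [Finset.sum_sub_distrib, hsum, sub_zero]
  rw [hshift]
  by_cases h : ∃ i, L i < 0
  · obtain ⟨i, hi⟩ := h
    rw [Finset.sum_eq_single i]
    · rw [abs_of_neg hi]
      linarith [hL i]
    · intro j _ hj
      rw [abs_of_nonneg (not_lt.1 fun hj' => hj (hneg hj' hi)), sub_self]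
    · simp
  · push Not at h
    simp [abs_of_nonneg (h _), hc]

section InnerProductSpace

variable {𝕜 E F : Type*} [RCLike 𝕜] [NormedAddCommGroup E] [InnerProductSpace 𝕜 E]

theorem LinearMap.subsingleton_setOf_eigenvalue_neg (T : E →ₗ[𝕜] E) (φ : E)
    (hT : ∀ u, -‖⟪φ, u⟫_𝕜‖ ^ 2 ≤ re ⟪u, T u⟫_𝕜) {ι : Type*} {b : ι → E}
    (hb : Orthonormal 𝕜 b) {L : ι → ℝ} (hTb : ∀ i, T (b i) = (L i : 𝕜) • b i) :
    {i | L i < 0}.Subsingleton := by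
  intro i hi j hj
  by_contra hij
  have hdiag : ∀ k, re ⟪b k, T (b k)⟫_𝕜 = L k := by
    intro k
    simp [hTb, inner_smul_right, inner_self_eq_norm_sq_to_K, hb.1 k]
  set u := ⟪φ, b j⟫_𝕜 • b i - ⟪φ, b i⟫_𝕜 • b j
  have hφu : ⟪φ, u⟫_𝕜 = 0 := by
    simp only [u, inner_sub_right, inner_smul_right]
    ring
  have hu : ⟪u, T u⟫_𝕜 =
      L i * (conj ⟪φ, b j⟫_𝕜 * ⟪φ, b j⟫_𝕜) + L j * (conj ⟪φ, b i⟫_𝕜 * ⟪φ, b i⟫_𝕜) := by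
    simp only [u, map_sub, map_smul, hTb, inner_sub_left, inner_sub_right, inner_smul_left,
      inner_smul_right, hb.inner_eq_zero hij, hb.inner_eq_zero (Ne.symm hij),
      inner_self_eq_norm_sq_to_K, hb.1 i, hb.1 j, inner_conj_symm, map_one, one_pow]
    ring
  have hu' : re ⟪u, T u⟫_𝕜 = L i * ‖⟪φ, b j⟫_𝕜‖ ^ 2 + L j * ‖⟪φ, b i⟫_𝕜‖ ^ 2 := by
    rw [hu, RCLike.conj_mul, RCLike.conj_mul]
    norm_cast
  have hTu := hT u
  have hTbi := hT (b i)
  have hTbj := hT (b j)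
  rw [hφu, hu', norm_zero] at hTu
  rw [hdiag] at hTbi hTbj
  simp only [Set.mem_ofPred_eq] at hi hj
  nlinarith [mul_pos (neg_pos.2 hi) (neg_pos.2 hj)]

theorem norm_inner_sq_sub_norm_sq_le [SeminormedAddCommGroup F] [NormedSpace 𝕜 F]
    (S : E →ₗ[𝕜] F) {φ v : E} {t : ℝ} (hφ : ‖φ‖ = 1) (hv : ‖v‖ ≤ 1) (ht : 0 ≤ t)
    (hSφ : ‖S φ‖ ^ 2 = 1 - t) (hS : ∀ w, ⟪φ, w⟫_𝕜 = 0 → ‖S w‖ ^ 2 ≤ t * ‖w‖ ^ 2) :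
    ‖⟪φ, v⟫_𝕜‖ ^ 2 - ‖S v‖ ^ 2 ≤ 2 * √t := by
  set a := ⟪φ, v⟫_𝕜
  set w := v - a • φ
  have hφw : ⟪φ, w⟫_𝕜 = 0 := by
    simp [w, a, inner_sub_right, inner_smul_right, inner_self_eq_norm_sq_to_K, hφ]
  have ha : ‖a‖ ≤ 1 := (norm_inner_le_norm φ v).trans (by rwa [hφ, one_mul])
  have hw : ‖w‖ ≤ 1 := by
    have hpyth : ‖v‖ ^ 2 = ‖a • φ‖ ^ 2 + ‖w‖ ^ 2 := by
      rw [← add_sub_cancel (a • φ) v, norm_add_sq (𝕜 := 𝕜), inner_smul_left, hφw]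
      simp [w]
    nlinarith [norm_nonneg w, norm_nonneg v, sq_nonneg ‖a • φ‖]
  have hs : ‖S w‖ ≤ √t := Real.le_sqrt_of_sq_le <| (hS w hφw).trans <|
    mul_le_of_le_one_right ht (pow_le_one₀ (norm_nonneg w) hw)
  have hp : ‖a • S φ‖ ^ 2 = ‖a‖ ^ 2 * (1 - t) := by rw [norm_smul, mul_pow, hSφ]
  have hSv : S v = a • S φ + S w := by rw [← map_smul, ← map_add, add_sub_cancel]
  have htri : (‖a • S φ‖ - ‖S w‖) ^ 2 ≤ ‖S v‖ ^ 2 := by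
    rw [← sq_abs, hSv, ← sub_neg_eq_add, ← norm_neg (S w)]
    exact pow_le_pow_left₀ (abs_nonneg _) (abs_norm_sub_norm_le _ _) 2
  have hr := Real.sq_sqrt ht
  have hr1 : √t ≤ 1 := Real.sqrt_le_one.2 (by nlinarith [sq_nonneg ‖S φ‖])
  have hp1 : ‖a • S φ‖ ≤ 1 := by nlinarith [norm_nonneg (a • S φ), norm_nonneg a]
  -- With `p = ‖a • S φ‖` and `s = ‖S w‖`:
  -- `‖a‖² - ‖S v‖² ≤ ‖a‖² t + 2 p s - s² ≤ t + 2 s - s² ≤ 2 √t`, the last step as `s ≤ √t ≤ 1`.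
  have h1 : ‖a‖ ^ 2 * t ≤ t := mul_le_of_le_one_left ht (pow_le_one₀ (norm_nonneg a) ha)
  have h2 : ‖a • S φ‖ * ‖S w‖ ≤ ‖S w‖ := mul_le_of_le_one_left (norm_nonneg _) hp1
  have h3 : 0 ≤ (√t - ‖S w‖) * (2 - √t - ‖S w‖) :=
    mul_nonneg (sub_nonneg.2 hs) (by linarith [norm_nonneg (S w)])
  nlinarith

end InnerProductSpace

namespace Matrix

variable {𝕜 n : Type*} [RCLike 𝕜] [Fintype n] [DecidableEq n]

theorem toEuclideanLin_vecMulVec_apply (x y v : EuclideanSpace 𝕜 n) :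
    toEuclideanLin (vecMulVec (ofLp x) (star (ofLp y))) v = ⟪y, v⟫_𝕜 • x := by
  rw [← InnerProductSpace.symm_toEuclideanLin_rankOne, LinearEquiv.apply_symm_apply]
  rfl

theorem IsHermitian.toEuclideanLin_eigenvectorBasis {A : Matrix n n 𝕜} (hA : A.IsHermitian)
    (i : n) :
    toEuclideanLin A (hA.eigenvectorBasis i) = (hA.eigenvalues i : 𝕜) • hA.eigenvectorBasis i := by
  rw [toLpLin_apply, hA.mulVec_eigenvectorBasis, RCLike.real_smul_eq_coe_smul (K := 𝕜)]
  rfl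

theorem PosSemidef.re_inner_toEuclideanLin_le_trace_mul {M : Matrix n n 𝕜} (hM : M.PosSemidef)
    (x : EuclideanSpace 𝕜 n) : re ⟪x, toEuclideanLin M x⟫_𝕜 ≤ re M.trace * ‖x‖ ^ 2 := by
  obtain ⟨m, u, rfl⟩ := posSemidef_iff_eq_sum_vecMulVec.mp hM
  simp only [map_sum, LinearMap.sum_apply, inner_sum, trace_sum, Finset.sum_mul]
  refine Finset.sum_le_sum fun k _ => ?_
  have hu := toEuclideanLin_vecMulVec_apply (toLp 2 (u k)) (toLp 2 (u k)) x
  rw [ofLp_toLp] at hu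
  rw [hu, inner_smul_right, ← inner_conj_symm x, RCLike.mul_conj, trace_vecMulVec,
    ← EuclideanSpace.inner_toLp_toLp, inner_self_eq_norm_sq_to_K]
  norm_cast
  rw [← mul_pow]
  exact pow_le_pow_left₀ (norm_nonneg _) (norm_inner_le_norm _ _) 2

theorem IsHermitian.exists_eq_vecMulVec_of_rank_eq_one {P : Matrix n n 𝕜}
    (hP : P.IsHermitian) (hPP : IsIdempotentElem P) (hrank : P.rank = 1) :
    ∃ φ : EuclideanSpace 𝕜 n, ‖φ‖ = 1 ∧ P = vecMulVec (ofLp φ) (star (ofLp φ)) := by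
  obtain ⟨⟨i₀, hi₀⟩, huniq⟩ :=
    Fintype.card_eq_one_iff.mp (hP.rank_eq_card_non_zero_eigs ▸ hrank)
  have hμ : ∀ i, hP.eigenvalues i = if i = i₀ then 1 else 0 := by
    intro i
    have h01 : hP.eigenvalues i = 0 ∨ hP.eigenvalues i = 1 := by
      simpa using hPP.spectrum_subset ℝ (hP.eigenvalues_mem_spectrum_real i)
    split_ifs with h
    · subst h
      exact h01.resolve_left hi₀
    · exact h01.resolve_right fun h1 => h (congrArg Subtype.val (huniq ⟨i, by simp [h1]⟩))
  refine ⟨hP.eigenvectorBasis i₀, hP.eigenvectorBasis.orthonormal.1 i₀, ?_⟩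
  apply toEuclideanLin.injective
  refine hP.eigenvectorBasis.toBasis.ext fun i => ?_
  rw [OrthonormalBasis.coe_toBasis, toEuclideanLin_vecMulVec_apply,
    hP.toEuclideanLin_eigenvectorBasis, hμ i,
    orthonormal_iff_ite.mp hP.eigenvectorBasis.orthonormal]
  obtain rfl | h := eq_or_ne i i₀
  · simp
  · simp [h, h.symm]

section RankOneProjection

variable {γ P : Matrix n n 𝕜} {φ : EuclideanSpace 𝕜 n}

theorem toEuclideanLin_one_sub_vecMulVec_apply
    (hPφ : P = vecMulVec (ofLp φ) (star (ofLp φ))) (v : EuclideanSpace 𝕜 n) :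
    toEuclideanLin (1 - P) v = v - ⟪φ, v⟫_𝕜 • φ := by
  rw [map_sub, LinearMap.sub_apply, hPφ, toEuclideanLin_vecMulVec_apply]
  simp

theorem re_inner_toEuclideanLin_sub_vecMulVec
    (hPφ : P = vecMulVec (ofLp φ) (star (ofLp φ))) (γ : Matrix n n 𝕜) (v : EuclideanSpace 𝕜 n) :
    re ⟪v, toEuclideanLin (γ - P) v⟫_𝕜 = re ⟪v, toEuclideanLin γ v⟫_𝕜 - ‖⟪φ, v⟫_𝕜‖ ^ 2 := by
  rw [map_sub, LinearMap.sub_apply, inner_sub_right, map_sub, hPφ,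
    toEuclideanLin_vecMulVec_apply, inner_smul_right, ← inner_conj_symm v φ, RCLike.mul_conj]
  norm_cast

theorem trace_one_sub_mul_mul_one_sub_of_eq_vecMulVec (hφ : ‖φ‖ = 1)
    (hPφ : P = vecMulVec (ofLp φ) (star (ofLp φ))) (γ : Matrix n n 𝕜) :
    ((1 - P) * γ * (1 - P)).trace = γ.trace - ⟪φ, toEuclideanLin γ φ⟫_𝕜 := by
  have hPP : IsIdempotentElem P := by
    rw [IsIdempotentElem, hPφ, vecMulVec_mul_vecMulVec, dotProduct_comm,
      ← EuclideanSpace.inner_eq_star_dotProduct, inner_self_eq_norm_sq_to_K, hφ]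
    simp
  rw [trace_mul_cycle, hPP.one_sub.eq, sub_mul, one_mul, trace_sub, trace_mul_comm, hPφ,
    mul_vecMulVec, trace_vecMulVec]
  rfl

theorem PosSemidef.one_sub_mul_mul_one_sub (hγ : γ.PosSemidef)
    (hPφ : P = vecMulVec (ofLp φ) (star (ofLp φ))) : ((1 - P) * γ * (1 - P)).PosSemidef := by
  have hQ : (1 - P)ᴴ = 1 - P := by
    rw [conjTranspose_sub, conjTranspose_one, hPφ, conjTranspose_vecMulVec, star_star]
  have hQγQ := hγ.conjTranspose_mul_mul_same (1 - P)
  rwa [hQ] at hQγQ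

theorem PosSemidef.re_inner_toEuclideanLin_le_of_inner_eq_zero (hγ : γ.PosSemidef)
    (hPφ : P = vecMulVec (ofLp φ) (star (ofLp φ))) {w : EuclideanSpace 𝕜 n}
    (hw : ⟪φ, w⟫_𝕜 = 0) :
    re ⟪w, toEuclideanLin γ w⟫_𝕜 ≤ re ((1 - P) * γ * (1 - P)).trace * ‖w‖ ^ 2 := by
  have hwφ : ⟪w, φ⟫_𝕜 = 0 := by rw [← inner_conj_symm, hw, map_zero]
  have hQw : ⟪w, toEuclideanLin ((1 - P) * γ * (1 - P)) w⟫_𝕜 = ⟪w, toEuclideanLin γ w⟫_𝕜 := by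
    simp only [toLpLin_mul_same, LinearMap.comp_apply,
      toEuclideanLin_one_sub_vecMulVec_apply hPφ, hw, zero_smul, sub_zero, inner_sub_right,
      inner_smul_right, hwφ, mul_zero]
  rw [← hQw]
  exact (hγ.one_sub_mul_mul_one_sub hPφ).re_inner_toEuclideanLin_le_trace_mul w

theorem PosSemidef.neg_two_mul_sqrt_le_re_inner_sub (hγ : γ.PosSemidef)
    (hγtr : γ.trace = 1) (hφ : ‖φ‖ = 1) (hPφ : P = vecMulVec (ofLp φ) (star (ofLp φ)))
    {v : EuclideanSpace 𝕜 n} (hv : ‖v‖ ≤ 1) :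
    -(2 * √(re ((1 - P) * γ * (1 - P)).trace)) ≤ re ⟪v, toEuclideanLin (γ - P) v⟫_𝕜 := by
  have ht : 0 ≤ re ((1 - P) * γ * (1 - P)).trace :=
    (RCLike.nonneg_iff.mp (hγ.one_sub_mul_mul_one_sub hPφ).trace_nonneg).1
  have hφγ : re ⟪φ, toEuclideanLin γ φ⟫_𝕜 = 1 - re ((1 - P) * γ * (1 - P)).trace := by
    rw [trace_one_sub_mul_mul_one_sub_of_eq_vecMulVec hφ hPφ, hγtr]
    simp
  obtain ⟨B, rfl⟩ : ∃ B : Matrix n n 𝕜, γ = Bᴴ * B := by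
    open scoped MatrixOrder in exact CStarAlgebra.nonneg_iff_eq_star_mul_self.mp hγ.nonneg
  have hB : ∀ x, re ⟪x, toEuclideanLin (Bᴴ * B) x⟫_𝕜 = ‖toEuclideanLin B x‖ ^ 2 := by
    intro x
    rw [toLpLin_mul_same, LinearMap.comp_apply, toEuclideanLin_conjTranspose_eq_adjoint,
      LinearMap.adjoint_inner_right, inner_self_eq_norm_sq]
  have key := norm_inner_sq_sub_norm_sq_le (toEuclideanLin B) hφ hv ht (by rw [← hB, hφγ])
    fun w hw => hB w ▸ hγ.re_inner_toEuclideanLin_le_of_inner_eq_zero hPφ hw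
  rw [re_inner_toEuclideanLin_sub_vecMulVec hPφ, hB]
  linarith

end RankOneProjection

end Matrix

/-- Trace-norm convergence to a rank-one projection from smallness of the
excitation expectation, formulated for (finite-dimensional) density matrices. -/
theorem traceNorm_sub_rankOne_proj_le {n : ℕ} (γ P : Matrix (Fin n) (Fin n) ℂ)
    (hγ : γ.PosSemidef) (hγtr : γ.trace = 1)
    (hP : P.IsHermitian) (hPproj : P * P = P) (hPrank : P.rank = 1)
    (hsub : (γ - P).IsHermitian) :
    ∑ i, |hsub.eigenvalues i| ≤
      4 * Real.sqrt (((1 - P) * γ * (1 - P)).trace.re) := by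
  obtain ⟨φ, hφ, hPφ⟩ := hP.exists_eq_vecMulVec_of_rank_eq_one hPproj hPrank
  have hb := hsub.eigenvectorBasis.orthonormal
  have hsum : ∑ i, hsub.eigenvalues i = 0 := by
    have hPtr : P.trace = 1 := by
      rw [hPφ, trace_vecMulVec, ← EuclideanSpace.inner_eq_star_dotProduct,
        inner_self_eq_norm_sq_to_K, hφ]
      simp
    have htr := hsub.trace_eq_sum_eigenvalues
    rw [trace_sub, hγtr, hPtr, sub_self] at htr
    simpa using congrArg re htr.symm
  have hlow : ∀ i, -(2 * √(((1 - P) * γ * (1 - P)).trace.re)) ≤ hsub.eigenvalues i := by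
    intro i
    rw [hsub.eigenvalues_eq, dotProduct_comm]
    exact hγ.neg_two_mul_sqrt_le_re_inner_sub hγtr hφ hPφ (hb.1 i).le
  have hneg : {i | hsub.eigenvalues i < 0}.Subsingleton := by
    refine (toEuclideanLin (γ - P)).subsingleton_setOf_eigenvalue_neg φ (fun u => ?_) hb
      hsub.toEuclideanLin_eigenvectorBasis
    rw [re_inner_toEuclideanLin_sub_vecMulVec hPφ]
    linarith [(isPositive_toEuclideanLin_iff.mpr hγ).re_inner_nonneg_right u]
  linarith [sum_abs_le_two_mul_of_sum_eq_zero hsum (by positivity) hlow hneg]
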